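/- Let Kₙ be the complete graph on n vertices and 𝒜 = {a ∈ ℤ^n : a₁,…,a_{n-2} ∈ {0,…,n-1}, a_{n-1} = 0}. Then every d ∈ ℤ^n is equivalent modulo the image of the Laplacian of Kₙ to a unique a ∈ 𝒜, given by aⱼ = (dⱼ - d_{n-1}) mod n for j ≤ n-2, a_{n-1} = 0, and aₙ = deg(d) - a₁ - ⋯ - a_{n-2}. -/

import Mathlib

open scoped BigOperators

/-- degree of a divisor -/
def deg {n : ℕ} (d : Fin n → ℤ) : ℤ := ∑ i, d i

/-- initially zero: vanishes for all sufficiently small degree -/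
def InitiallyZero {n : ℕ} (f : (Fin n → ℤ) → ℤ) : Prop :=
  ∃ a : ℤ, ∀ d, deg d ≤ a → f d = 0

/-- indicator vector of a finite set of coordinates -/
def eI {n : ℕ} (I : Finset (Fin n)) : Fin n → ℤ := fun i => if i ∈ I then 1 else 0

/-- standard basis vector -/
def stdB {n : ℕ} (i : Fin n) : Fin n → ℤ := fun j => if j = i then 1 else 0

/-- the Möbius operator 𝔪 -/
def mob {n : ℕ} (f : (Fin n → ℤ) → ℤ) : (Fin n → ℤ) → ℤ :=
  fun d => ∑ I : Finset (Fin n), (-1) ^ I.card * f (d - eI I)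

/-- a modular function -/
def Modular {n : ℕ} (h : (Fin n → ℤ) → ℤ) : Prop := ∀ d, mob h d = 0

/-- L¹ distance (as a natural number) from `d` to the set `N` -/
noncomputable def distTo {n : ℕ} (N : Set (Fin n → ℤ)) (d : Fin n → ℤ) : ℕ :=
  sInf {k : ℕ | ∃ d' ∈ N, ∑ i, (d i - d' i).natAbs = k}

/-- equivalence modulo the image of the Laplacian of the complete graph Kₙ:
the Laplacian sends `x` to `fun i => n * x i - ∑ j, x j`. -/
def lapEquiv (n : ℕ) (d d' : Fin n → ℤ) : Prop :=
  ∃ x : Fin n → ℤ, ∀ i, d i - d' i = (n : ℤ) * x i - ∑ j, x j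

/-- divisors of Kₙ not equivalent to an effective divisor -/
def NKn (n : ℕ) : Set (Fin n → ℤ) :=
  {d | ¬ ∃ d' : Fin n → ℤ, (∀ i, 0 ≤ d' i) ∧ lapEquiv n d d'}

/-- the Baker–Norine rank of the complete graph Kₙ -/
noncomputable def rBN (n : ℕ) (d : Fin n → ℤ) : ℤ :=
  (distTo (NKn n) d : ℤ) - 1

/-!
The image of the Laplacian of `Kₙ` consists of the vectors of degree `0` whose coordinates are
all congruent modulo `n` (for `v i = n x i - ∑ x`, the common residue is `-∑ x`, and conversely
writing `v i = c + n y i`, degree `0` forces `c = -∑ y`). Hence `d ~ d'` iff `deg d = deg d'`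
and `d - d'` is constant modulo `n`. Normalizing the coordinate `n - 2` to `0` fixes that
constant, reducing the first `n - 2` coordinates modulo `n` fixes them, and the degree
determines the last one.
-/

open Finset

namespace lapEquiv

variable {n : ℕ} {d d' d'' : Fin n → ℤ}

theorem symm (h : lapEquiv n d d') : lapEquiv n d' d := by
  obtain ⟨x, hx⟩ := h
  refine ⟨-x, fun i => ?_⟩
  simp only [Pi.neg_apply, sum_neg_distrib]
  linarith [hx i]

theorem trans (h : lapEquiv n d d') (h' : lapEquiv n d' d'') : lapEquiv n d d'' := by
  obtain ⟨x, hx⟩ := h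
  obtain ⟨y, hy⟩ := h'
  refine ⟨x + y, fun i => ?_⟩
  simp only [Pi.add_apply, sum_add_distrib]
  linarith [hx i, hy i]

theorem deg_eq (h : lapEquiv n d d') : deg d = deg d' := by
  obtain ⟨x, hx⟩ := h
  have : deg d - deg d' = ∑ i, ((n : ℤ) * x i - ∑ j, x j) := by
    simp only [deg, ← sum_sub_distrib, hx]
  rw [sum_sub_distrib, ← mul_sum, sum_const, card_univ, Fintype.card_fin, nsmul_eq_mul,
    sub_self] at this
  linarith

theorem sub_modEq (h : lapEquiv n d d') (i j : Fin n) :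
    d i - d' i ≡ d j - d' j [ZMOD n] := by
  obtain ⟨x, hx⟩ := h
  rw [hx, hx]
  exact Int.ModEq.sub_right _ ((Int.mul_emod_right _ _).trans (Int.mul_emod_right _ _).symm)

end lapEquiv

section

variable {n : ℕ}

theorem modEq_of_sum_eq_zero_of_forall_ne {v : Fin n → ℤ} (hv : ∑ i, v i = 0) {c : ℤ}
    (k : Fin n) (h : ∀ i ≠ k, v i ≡ c [ZMOD n]) : v k ≡ c [ZMOD n] := by
  have hrest : (n : ℤ) ∣ ∑ i ∈ {k}ᶜ, (c - v i) :=
    dvd_sum fun i hi => Int.modEq_iff_dvd.1 (h i (by simpa using hi))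
  have htotal : ∑ i, (c - v i) = n * c := by
    simp [sum_sub_distrib, hv]
  rw [Fintype.sum_eq_add_sum_compl k] at htotal
  refine Int.modEq_iff_dvd.2 ?_
  rw [show c - v k = n * c - ∑ i ∈ {k}ᶜ, (c - v i) by linarith]
  exact dvd_sub (dvd_mul_right _ _) hrest

theorem lapEquiv_of_deg_eq_of_modEq {d d' : Fin n → ℤ} (k : Fin n) (hdeg : deg d = deg d')
    {c : ℤ} (hmod : ∀ i ≠ k, d i - d' i ≡ c [ZMOD n]) : lapEquiv n d d' := by
  have hsum : ∑ i, (d i - d' i) = 0 := by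
    rw [sum_sub_distrib]
    exact sub_eq_zero.2 hdeg
  have hall (i : Fin n) : d i - d' i ≡ c [ZMOD n] := by
    by_cases hi : i = k
    · exact hi ▸ modEq_of_sum_eq_zero_of_forall_ne hsum k hmod
    · exact hmod i hi
  choose y hy using fun i => (hall i).symm.dvd
  have hnc : (n : ℤ) * c = n * -∑ j, y j := by
    have := sum_congr rfl fun i (_ : i ∈ univ) => hy i
    rw [sum_sub_distrib, hsum, sum_const, card_univ, Fintype.card_fin, nsmul_eq_mul,
      ← mul_sum] at this
    linarith
  have hc := mul_left_cancel₀ (by exact_mod_cast k.pos.ne') hnc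
  exact ⟨y, fun i => by linarith [hy i]⟩

theorem eq_of_deg_eq_of_forall_ne {a b : Fin n → ℤ} (k : Fin n) (hdeg : deg a = deg b)
    (h : ∀ i ≠ k, a i = b i) : a = b := by
  funext i
  by_cases hi : i = k
  · subst hi
    rw [deg, deg, Fintype.sum_eq_add_sum_compl i, Fintype.sum_eq_add_sum_compl i b,
      sum_congr rfl fun j hj => h j (by simpa using hj)] at hdeg
    linarith
  · exact h i hi

end

section NormalForm

variable {n : ℕ} (hn : 2 ≤ n)

def penultimateVertex : Fin n := ⟨n - 2, Nat.sub_lt_self two_pos hn⟩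

def lastVertex : Fin n := ⟨n - 1, Nat.sub_lt_self one_pos (one_le_two.trans hn)⟩

theorem val_penultimateVertex : (penultimateVertex hn : ℕ) = n - 2 := rfl

theorem val_lastVertex : (lastVertex hn : ℕ) = n - 1 := rfl

theorem sum_eq_sum_filter_lt_add_add (f : Fin n → ℤ) :
    ∑ i, f i = ∑ i ∈ univ.filter (fun i : Fin n => (i : ℕ) < n - 2), f i
      + f (penultimateVertex hn) + f (lastVertex hn) := by
  rw [← sum_filter_add_sum_filter_not univ (fun i : Fin n => (i : ℕ) < n - 2), add_assoc]
  have hrest : univ.filter (fun i : Fin n => ¬ (i : ℕ) < n - 2) =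
      {penultimateVertex hn, lastVertex hn} := by
    ext i
    simp only [mem_filter, mem_univ, true_and, mem_insert, mem_singleton, Fin.ext_iff,
      val_penultimateVertex, val_lastVertex]
    omega
  have hne : penultimateVertex hn ≠ lastVertex hn := by
    simp only [ne_eq, Fin.ext_iff, val_penultimateVertex, val_lastVertex]
    omega
  rw [hrest, sum_pair hne]

theorem lt_sub_two_or_eq_of_ne_last {i : Fin n} (hi : i ≠ lastVertex hn) :
    (i : ℕ) < n - 2 ∨ i = penultimateVertex hn := by
  rw [ne_eq, Fin.ext_iff, val_lastVertex] at hi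
  rw [Fin.ext_iff, val_penultimateVertex]
  have := i.isLt
  omega

def normalForm (d : Fin n → ℤ) : Fin n → ℤ := fun j =>
  if (j : ℕ) < n - 2 then (d j - d (penultimateVertex hn)) % n
  else if (j : ℕ) = n - 2 then 0
  else deg d - ∑ i ∈ univ.filter (fun i : Fin n => (i : ℕ) < n - 2),
    (d i - d (penultimateVertex hn)) % n

def IsNormalForm (a : Fin n → ℤ) : Prop :=
  (∀ j : Fin n, (j : ℕ) < n - 2 → 0 ≤ a j ∧ a j ≤ (n : ℤ) - 1) ∧
    a (penultimateVertex hn) = 0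

variable {hn}

theorem normalForm_of_lt (d : Fin n → ℤ) {j : Fin n} (hj : (j : ℕ) < n - 2) :
    normalForm hn d j = (d j - d (penultimateVertex hn)) % n :=
  if_pos hj

theorem normalForm_penultimate (d : Fin n → ℤ) :
    normalForm hn d (penultimateVertex hn) = 0 := by
  simp [normalForm, val_penultimateVertex]

theorem isNormalForm_normalForm (d : Fin n → ℤ) : IsNormalForm hn (normalForm hn d) := by
  refine ⟨fun j hj => ?_, normalForm_penultimate d⟩
  rw [normalForm_of_lt d hj]
  have hn0 : (0 : ℤ) < n := by omega
  exact ⟨Int.emod_nonneg _ hn0.ne',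
    by linarith [Int.emod_lt_of_pos (d j - d (penultimateVertex hn)) hn0]⟩

theorem deg_normalForm (d : Fin n → ℤ) : deg (normalForm hn d) = deg d := by
  rw [deg, sum_eq_sum_filter_lt_add_add hn, normalForm_penultimate,
    sum_congr rfl fun i hi => normalForm_of_lt d (mem_filter.1 hi).2]
  simp only [normalForm, val_lastVertex, show ¬ n - 1 < n - 2 by omega,
    show n - 1 ≠ n - 2 by omega, if_false]
  ring

theorem lapEquiv_normalForm (d : Fin n → ℤ) : lapEquiv n d (normalForm hn d) := by
  refine lapEquiv_of_deg_eq_of_modEq (lastVertex hn) (deg_normalForm d).symm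
    (c := d (penultimateVertex hn)) fun i hi => ?_
  rcases lt_sub_two_or_eq_of_ne_last hn hi with hi | rfl
  · rw [normalForm_of_lt d hi]
    simpa using (Int.mod_modEq (d i - d (penultimateVertex hn)) n).sub_left (d i)
  · rw [normalForm_penultimate, sub_zero]

theorem IsNormalForm.eq_of_lapEquiv {a b : Fin n → ℤ} (ha : IsNormalForm hn a)
    (hb : IsNormalForm hn b) (h : lapEquiv n a b) : a = b := by
  refine eq_of_deg_eq_of_forall_ne (lastVertex hn) h.deg_eq fun i hi => ?_
  rcases lt_sub_two_or_eq_of_ne_last hn hi with hi | rfl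
  · have hmod : a i ≡ b i [ZMOD n] := by
      simpa [ha.2, hb.2] using (h.sub_modEq i (penultimateVertex hn)).add_right (b i)
    obtain ⟨ha0, ha1⟩ := ha.1 i hi
    obtain ⟨hb0, hb1⟩ := hb.1 i hi
    rwa [Int.ModEq, Int.emod_eq_of_lt ha0 (by omega), Int.emod_eq_of_lt hb0 (by omega)] at hmod
  · rw [ha.2, hb.2]

end NormalForm

theorem stmt17 {n : ℕ} (hn : 2 ≤ n) (d : Fin n → ℤ) :
    letI a₀ : Fin n → ℤ := fun j =>
      if (j : ℕ) < n - 2 then (d j - d ⟨n - 2, by omega⟩) % n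
      else if (j : ℕ) = n - 2 then 0
      else deg d - ∑ i ∈ Finset.univ.filter (fun i : Fin n => (i : ℕ) < n - 2),
        (d i - d ⟨n - 2, by omega⟩) % n
    ((∀ j : Fin n, (j : ℕ) < n - 2 → 0 ≤ a₀ j ∧ a₀ j ≤ (n : ℤ) - 1) ∧
      a₀ ⟨n - 2, by omega⟩ = 0 ∧ lapEquiv n d a₀) ∧
    (∀ a : Fin n → ℤ,
      (∀ j : Fin n, (j : ℕ) < n - 2 → 0 ≤ a j ∧ a j ≤ (n : ℤ) - 1) →
      a ⟨n - 2, by omega⟩ = 0 → lapEquiv n d a → a = a₀) := by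
  have hnf : IsNormalForm hn (normalForm hn d) := isNormalForm_normalForm d
  have hequiv : lapEquiv n d (normalForm hn d) := lapEquiv_normalForm d
  exact ⟨⟨hnf.1, hnf.2, hequiv⟩, fun a ha hapen had =>
    IsNormalForm.eq_of_lapEquiv (hn := hn) ⟨ha, hapen⟩ hnf (had.symm.trans hequiv)⟩
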